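/- For every non-negative integer n, F_e(n) ∩ F_τ(n) = {0} and F_e(n) + F_τ(n) = F(n); that is, F(n) = F_e(n) ⊕ F_τ(n). -/

import Mathlib

open Submodule

/-- The increasing sequence of subspaces `F(n)`:
`F(0) = ⊥`, `F(n+1) = Σ_{i,j} (F(n) + Vᵢ) ⊓ (F(n) + Wⱼ)`. -/
noncomputable def Fseq {K E : Type*} [Field K] [AddCommGroup E] [Module K E]
    (V W : Fin 2 → Submodule K E) : ℕ → Submodule K E
  | 0 => ⊥
  | n + 1 => ⨆ i : Fin 2, ⨆ j : Fin 2, (Fseq V W n ⊔ V i) ⊓ (Fseq V W n ⊔ W j)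

/-- For a permutation `σ` of `{1,2}`, the increasing sequence of subspaces `F_σ(n)`:
`F_σ(0) = ⊥`, `F_σ(n+1) = Σ_i (F_σ(n) + Vᵢ) ⊓ (F_σ(n) + W_{σ(i)})`. -/
noncomputable def Fsig {K E : Type*} [Field K] [AddCommGroup E] [Module K E]
    (V W : Fin 2 → Submodule K E) (σ : Equiv.Perm (Fin 2)) : ℕ → Submodule K E
  | 0 => ⊥
  | n + 1 => ⨆ i : Fin 2, (Fsig V W σ n ⊔ V i) ⊓ (Fsig V W σ n ⊔ W (σ i))

/-!
Let `p` be the projection onto `V₀` along `V₁` and `q` the projection onto `W₀` along `W₁`.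
Then `a = p + q - 1` and `b = p - q` anticommute and satisfy `a² + b² = 1`; conversely
`p = (1 + a + b) / 2`, so subspaces invariant under `a` and `b` are invariant under `p` and `q`.
For such a subspace `S`, the sum `(S + V₀) ∩ (S + W₀) + (S + V₁) ∩ (S + W₁)` is `b⁻¹(S)` as
soon as `b⁻¹(S)` is `p`-invariant; for `S = ker bⁿ` this is `ker bⁿ⁺¹`. Replacing `q` by `1 - q`
swaps `W₀` and `W₁` and exchanges `a` and `b`. Hence `F_e(n) = ker bⁿ` and `F_τ(n) = ker aⁿ`.

As `a²` and `b² = 1 - a²` are coprime polynomials in `a²`, `ker aᵐ ∩ ker bⁿ = 0`. The same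
coprimality shows that `b x ∈ ker aⁿ + ker bⁿ` forces `x ∈ ker aⁿ + ker bⁿ⁺¹`, and symmetrically
for `a`, which gives `F(n) ⊆ ker aⁿ + ker bⁿ` by induction. Finally `F_σ(n) ⊆ F(n)` is immediate.
-/

open LinearMap Polynomial

theorem iSup_fin_two {α : Type*} [CompleteLattice α] (f : Fin 2 → α) :
    ⨆ i, f i = f 0 ⊔ f 1 :=
  le_antisymm (iSup_le (Fin.forall_fin_two.mpr ⟨le_sup_left, le_sup_right⟩))
    (sup_le (le_iSup f 0) (le_iSup f 1))

theorem pow_mul_eq_neg_one_pow_mul {A : Type*} [Ring A] {a b : A} (h : a * b = -(b * a))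
    (n : ℕ) : a ^ n * b = (-1) ^ n * (b * a ^ n) := by
  induction n with
  | zero => simp
  | succ n ih =>
    calc a ^ (n + 1) * b = a * (-1) ^ n * (b * a ^ n) := by rw [pow_succ', mul_assoc, ih, mul_assoc]
      _ = (-1) ^ n * (a * b) * a ^ n := by
        rw [← ((Commute.neg_one_left a).pow_left n).eq]; simp only [mul_assoc]
      _ = (-1) ^ (n + 1) * (b * a ^ (n + 1)) := by rw [h, pow_succ, pow_succ']; noncomm_ring

theorem commute_sq_of_mul_eq_neg {A : Type*} [Ring A] {a b : A} (h : a * b = -(b * a)) :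
    Commute (a ^ 2) b := by
  show a ^ 2 * b = b * a ^ 2
  simpa using pow_mul_eq_neg_one_pow_mul h 2

theorem IsIdempotentElem.add_sub_one_mul_sub {A : Type*} [Ring A] {p q : A}
    (hp : IsIdempotentElem p) (hq : IsIdempotentElem q) :
    (p + q - 1) * (p - q) = -((p - q) * (p + q - 1)) := by
  have hp' : p * p = p := hp
  have hq' : q * q = q := hq
  noncomm_ring [hp', hq']

theorem IsIdempotentElem.add_sub_one_sq_add_sub_sq {A : Type*} [Ring A] {p q : A}
    (hp : IsIdempotentElem p) (hq : IsIdempotentElem q) :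
    (p + q - 1) ^ 2 + (p - q) ^ 2 = 1 := by
  have hp' : p * p = p := hp
  have hq' : q * q = q := hq
  noncomm_ring [hp', hq']

namespace Module.End

variable {R M : Type*} [CommRing R] [AddCommGroup M] [Module R M]

section Anticommuting

variable {a b : End R M}

theorem ker_mem_invtSubmodule_of_commute (h : Commute a b) : ker a ∈ b.invtSubmodule := by
  intro x (hx : a x = 0)
  show a (b x) = 0
  rw [← mul_apply, h.eq, mul_apply, hx, map_zero]

theorem apply_pow_mul_eq_zero_iff (h : a * b = -(b * a)) (n : ℕ) (x : M) :
    (a ^ n) (b x) = 0 ↔ b ((a ^ n) x) = 0 := by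
  rw [← mul_apply, ← mul_apply, pow_mul_eq_neg_one_pow_mul h n]
  rcases neg_one_pow_eq_or (End R M) n with hs | hs <;> simp [hs]

theorem ker_pow_mem_invtSubmodule_of_mul_eq_neg (h : a * b = -(b * a)) (n : ℕ) :
    ker (a ^ n) ∈ b.invtSubmodule := by
  intro x (hx : (a ^ n) x = 0)
  show (a ^ n) (b x) = 0
  rw [apply_pow_mul_eq_zero_iff h, hx, map_zero]

theorem ker_pow_le_ker_pow_of_le (f : End R M) {k l : ℕ} (h : k ≤ l) :
    ker (f ^ k) ≤ ker (f ^ l) :=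
  fun _ => pow_map_zero_of_le h

theorem aeval_sq_eq_of_sq_add_sq (hsq : a ^ 2 + b ^ 2 = 1) (m n : ℕ) :
    aeval (a ^ 2) ((X : R[X]) ^ m) = a ^ (2 * m) ∧
      aeval (a ^ 2) ((1 - X : R[X]) ^ n) = b ^ (2 * n) := by
  simp [pow_mul, ← hsq]

theorem isCoprime_X_pow_one_sub_X_pow (m n : ℕ) : IsCoprime ((X : R[X]) ^ m) ((1 - X) ^ n) :=
  (show IsCoprime (X : R[X]) (1 - X) from ⟨1, 1, by ring⟩).pow

theorem disjoint_ker_pow_of_sq_add_sq (hsq : a ^ 2 + b ^ 2 = 1) (m n : ℕ) :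
    Disjoint (ker (a ^ m)) (ker (b ^ n)) := by
  obtain ⟨hX, h1X⟩ := aeval_sq_eq_of_sq_add_sq hsq m n
  have := disjoint_ker_aeval_of_isCoprime (a ^ 2) (isCoprime_X_pow_one_sub_X_pow (R := R) m n)
  rw [hX, h1X] at this
  exact this.mono (ker_pow_le_ker_pow_of_le a (by omega)) (ker_pow_le_ker_pow_of_le b (by omega))

theorem ker_pow_mul_pow_eq_sup_of_sq_add_sq (hsq : a ^ 2 + b ^ 2 = 1) (m n : ℕ) :
    ker (a ^ (2 * m) * b ^ (2 * n)) = ker (a ^ (2 * m)) ⊔ ker (b ^ (2 * n)) := by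
  obtain ⟨hX, h1X⟩ := aeval_sq_eq_of_sq_add_sq hsq m n
  rw [← hX, ← h1X, ← map_mul,
    sup_ker_aeval_eq_ker_aeval_mul_of_coprime _ (isCoprime_X_pow_one_sub_X_pow m n)]

theorem comap_sup_ker_pow_le (h : a * b = -(b * a)) (hsq : a ^ 2 + b ^ 2 = 1) (n : ℕ) :
    (ker (a ^ n) ⊔ ker (b ^ n)).comap b ≤ ker (a ^ n) ⊔ ker (b ^ (n + 1)) := by
  intro x hx
  obtain ⟨α, hα, β, hβ, hαβ⟩ := mem_sup.mp (mem_comap.mp hx)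
  -- `x` splits along the coprime factors of `a^(2n) b^(2n+2)`; the splitting of `b x` is unique
  have hx' : x ∈ ker (a ^ (2 * n)) ⊔ ker (b ^ (2 * (n + 1))) := by
    have hbx : b x ∈ ker (a ^ (2 * n) * b ^ (2 * n)) := by
      rw [ker_pow_mul_pow_eq_sup_of_sq_add_sq hsq]
      exact sup_le_sup (ker_pow_le_ker_pow_of_le a (by omega))
        (ker_pow_le_ker_pow_of_le b (by omega)) (mem_comap.mp hx)
    have hcomm : Commute (a ^ (2 * n) * b ^ (2 * n)) b :=
      (pow_mul a 2 n ▸ (commute_sq_of_mul_eq_neg h).pow_left n).mul_left (Commute.pow_self b _)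
    rw [← ker_pow_mul_pow_eq_sup_of_sq_add_sq hsq, mem_ker,
      show 2 * (n + 1) = 2 * n + 1 + 1 by ring, pow_succ, pow_succ, ← mul_assoc, ← mul_assoc,
      hcomm.eq, mul_apply, mul_apply, mem_ker.mp hbx, map_zero]
  obtain ⟨u, hu, w, hw, rfl⟩ := mem_sup.mp hx'
  obtain ⟨hbu, hbw⟩ : b u = α ∧ b w = β := by
    have hdisj := disjoint_ker_pow_of_sq_add_sq hsq (2 * n) (2 * (n + 1))
    have := disjoint_iff_add_eq_zero.mp hdisj
      (sub_mem (ker_pow_mem_invtSubmodule_of_mul_eq_neg h _ hu)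
        (ker_pow_le_ker_pow_of_le a (by omega) hα))
      (sub_mem (ker_mem_invtSubmodule_of_commute (Commute.self_pow b _).symm hw)
        (ker_pow_le_ker_pow_of_le b (by omega) hβ))
      (by rw [sub_add_sub_comm, ← map_add, hαβ, sub_self])
    simpa [sub_eq_zero] using this
  refine mem_sup.mpr ⟨u, ?_, w, ?_, rfl⟩
  · have h1 : (a ^ n) u ∈ ker (a ^ n) := by
      rw [mem_ker, ← mul_apply, ← pow_add, ← two_mul]; exact hu
    have h2 : (a ^ n) u ∈ ker (b ^ 1) := by
      rw [mem_ker, pow_one, ← apply_pow_mul_eq_zero_iff h, hbu]; exact hα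
    exact disjoint_def.mp (disjoint_ker_pow_of_sq_add_sq hsq n 1) _ h1 h2
  · rw [mem_ker, pow_succ, mul_apply, hbw]; exact hβ

end Anticommuting

section Idempotent

variable {p q : End R M} {S : Submodule R M}

theorem one_sub_mem_invtSubmodule (h : S ∈ p.invtSubmodule) : S ∈ (1 - p).invtSubmodule :=
  fun _ hx => sub_mem hx (h hx)

theorem mem_invtSubmodule_of_add_sub_one_of_sub [Invertible (2 : R)]
    (ha : S ∈ (p + q - 1).invtSubmodule) (hb : S ∈ (p - q).invtSubmodule) :
    S ∈ p.invtSubmodule ∧ S ∈ q.invtSubmodule := by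
  have hp : S ∈ p.invtSubmodule := by
    intro x hx
    have hpx : p x = ⅟(2 : R) • (x + (p + q - 1) x + (p - q) x) := by
      rw [← invOf_smul_smul (2 : R) (p x), two_smul]
      simp only [LinearMap.sub_apply, LinearMap.add_apply, one_apply]
      congr 1; abel
    show p x ∈ S
    rw [hpx]
    exact S.smul_mem _ (S.add_mem (S.add_mem hx (ha hx)) (hb hx))
  refine ⟨hp, fun x hx => ?_⟩
  show q x ∈ S
  rw [show q x = p x - (p - q) x by simp]
  exact sub_mem (hp hx) (hb hx)

theorem sup_ker_inf_sup_ker_le_comap_sub (hSp : S ∈ p.invtSubmodule)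
    (hSq : S ∈ q.invtSubmodule) : (S ⊔ ker p) ⊓ (S ⊔ ker q) ≤ S.comap (p - q) := by
  rintro x ⟨hxp, hxq⟩
  obtain ⟨f, hf, v, hv, rfl⟩ := mem_sup.mp hxp
  obtain ⟨g, hg, w, hw, hgw⟩ := mem_sup.mp hxq
  show (p - q) (f + v) ∈ S
  rw [LinearMap.sub_apply, map_add, mem_ker.mp hv, add_zero, ← hgw, map_add, mem_ker.mp hw,
    add_zero]
  exact sub_mem (hSp hf) (hSq hg)

theorem comap_one_sub_sub_one_sub : S.comap ((1 - p) - (1 - q)) = S.comap (p - q) := by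
  rw [sub_sub_sub_cancel_left, ← neg_sub, comap_neg]

theorem sup_range_inf_sup_range_le_comap_sub (hp : IsIdempotentElem p)
    (hq : IsIdempotentElem q) (hSp : S ∈ p.invtSubmodule) (hSq : S ∈ q.invtSubmodule) :
    (S ⊔ range p) ⊓ (S ⊔ range q) ≤ S.comap (p - q) := by
  have := sup_ker_inf_sup_ker_le_comap_sub (one_sub_mem_invtSubmodule hSp)
    (one_sub_mem_invtSubmodule hSq)
  rwa [← hp.range_eq_ker_one_sub, ← hq.range_eq_ker_one_sub, comap_one_sub_sub_one_sub] at this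

theorem comap_sub_inf_range_le (hp : IsIdempotentElem p) :
    S.comap (p - q) ⊓ range p ≤ (S ⊔ range p) ⊓ (S ⊔ range q) := by
  rintro x ⟨hx, hxp⟩
  refine ⟨mem_sup_right hxp, mem_sup.mpr ⟨(p - q) x, hx, q x, mem_range_self q x, ?_⟩⟩
  rw [LinearMap.sub_apply, hp.mem_range_iff.mp hxp, sub_add_cancel]

theorem comap_sub_inf_ker_le (hp : IsIdempotentElem p) (hq : IsIdempotentElem q) :
    S.comap (p - q) ⊓ ker p ≤ (S ⊔ ker p) ⊓ (S ⊔ ker q) := by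
  have := comap_sub_inf_range_le (S := S) (q := 1 - q) hp.one_sub
  rwa [← hp.ker_eq_range_one_sub, ← hq.ker_eq_range_one_sub, comap_one_sub_sub_one_sub] at this

theorem le_inf_range_sup_inf_ker (hp : IsIdempotentElem p) {T : Submodule R M}
    (hT : T ∈ p.invtSubmodule) : T ≤ T ⊓ range p ⊔ T ⊓ ker p := by
  intro x hx
  refine mem_sup.mpr ⟨p x, ⟨hT hx, mem_range_self p x⟩, x - p x, ⟨sub_mem hx (hT hx), ?_⟩,
    add_sub_cancel _ _⟩
  rw [SetLike.mem_coe, mem_ker, map_sub, ← mul_apply, hp.eq, sub_self]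

theorem sup_inf_eq_comap_sub (hp : IsIdempotentElem p) (hq : IsIdempotentElem q)
    (hSp : S ∈ p.invtSubmodule) (hSq : S ∈ q.invtSubmodule)
    (hT : S.comap (p - q) ∈ p.invtSubmodule) :
    (S ⊔ range p) ⊓ (S ⊔ range q) ⊔ (S ⊔ ker p) ⊓ (S ⊔ ker q) = S.comap (p - q) :=
  le_antisymm
    (sup_le (sup_range_inf_sup_range_le_comap_sub hp hq hSp hSq)
      (sup_ker_inf_sup_ker_le_comap_sub hSp hSq))
    ((le_inf_range_sup_inf_ker hp hT).trans
      (sup_le_sup (comap_sub_inf_range_le hp) (comap_sub_inf_ker_le hp hq)))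

theorem ker_sub_pow_mem_invtSubmodule [Invertible (2 : R)] (hp : IsIdempotentElem p)
    (hq : IsIdempotentElem q) (n : ℕ) :
    ker ((p - q) ^ n) ∈ p.invtSubmodule ∧ ker ((p - q) ^ n) ∈ q.invtSubmodule :=
  mem_invtSubmodule_of_add_sub_one_of_sub
    (ker_pow_mem_invtSubmodule_of_mul_eq_neg (by rw [hp.add_sub_one_mul_sub hq, neg_neg]) n)
    (ker_mem_invtSubmodule_of_commute ((Commute.refl _).pow_left n))

theorem sup_inf_eq_ker_sub_pow_succ [Invertible (2 : R)] (hp : IsIdempotentElem p)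
    (hq : IsIdempotentElem q) (n : ℕ) :
    (ker ((p - q) ^ n) ⊔ range p) ⊓ (ker ((p - q) ^ n) ⊔ range q) ⊔
      (ker ((p - q) ^ n) ⊔ ker p) ⊓ (ker ((p - q) ^ n) ⊔ ker q) =
        ker ((p - q) ^ (n + 1)) := by
  have hcomap : (ker ((p - q) ^ n)).comap (p - q) = ker ((p - q) ^ (n + 1)) := by
    rw [pow_succ, mul_eq_comp, ker_comp]
  obtain ⟨hSp, hSq⟩ := ker_sub_pow_mem_invtSubmodule hp hq n
  have hT := (ker_sub_pow_mem_invtSubmodule hp hq (n + 1)).1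
  rw [sup_inf_eq_comap_sub hp hq hSp hSq (hcomap ▸ hT), hcomap]

theorem sup_inf_le_comap_sub_sup_comap_add_sub_one (hp : IsIdempotentElem p)
    (hq : IsIdempotentElem q) (hSp : S ∈ p.invtSubmodule) (hSq : S ∈ q.invtSubmodule)
    (i j : Fin 2) :
    (S ⊔ ![range p, ker p] i) ⊓ (S ⊔ ![range q, ker q] j) ≤
      S.comap (p - q) ⊔ S.comap (p + q - 1) := by
  have hS : S ∈ (1 - q).invtSubmodule := one_sub_mem_invtSubmodule hSq
  have hsub : p - (1 - q) = p + q - 1 := by abel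
  fin_cases i <;> fin_cases j <;> simp only [Fin.zero_eta, Fin.mk_one, Matrix.cons_val_zero,
    Matrix.cons_val_one]
  · exact le_sup_of_le_left (sup_range_inf_sup_range_le_comap_sub hp hq hSp hSq)
  · rw [hq.ker_eq_range_one_sub, ← hsub]
    exact le_sup_of_le_right (sup_range_inf_sup_range_le_comap_sub hp hq.one_sub hSp hS)
  · rw [hq.range_eq_ker_one_sub, ← hsub]
    exact le_sup_of_le_right (sup_ker_inf_sup_ker_le_comap_sub hSp hS)
  · exact le_sup_of_le_left (sup_ker_inf_sup_ker_le_comap_sub hSp hSq)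

end Idempotent

end Module.End

theorem exists_isIdempotentElem_eq_range_ker {R M : Type*} [Ring R] [AddCommGroup M] [Module R M]
    (V : Fin 2 → Submodule R M) (h : IsCompl (V 0) (V 1)) :
    ∃ p : Module.End R M, IsIdempotentElem p ∧ V = ![range p, ker p] :=
  ⟨_, Submodule.isIdempotentElem_projection h, by ext1 i; fin_cases i <;> simp⟩

section Sequences

open Module.End

variable {K E : Type*} [Field K] [AddCommGroup E] [Module K E]

theorem Fsig_le_Fseq (V W : Fin 2 → Submodule K E) (σ : Equiv.Perm (Fin 2)) (n : ℕ) :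
    Fsig V W σ n ≤ Fseq V W n := by
  induction n with
  | zero => exact le_rfl
  | succ n ih =>
    exact iSup_mono fun i => (inf_le_inf (sup_le_sup_right ih _) (sup_le_sup_right ih _)).trans
      (le_iSup (fun j => (Fseq V W n ⊔ V i) ⊓ (Fseq V W n ⊔ W j)) (σ i))

variable [Invertible (2 : K)] {p q : Module.End K E}

theorem Fsig_one_eq_ker_pow (hp : IsIdempotentElem p) (hq : IsIdempotentElem q) (n : ℕ) :
    Fsig ![range p, ker p] ![range q, ker q] 1 n = ker ((p - q) ^ n) := by
  induction n with
  | zero => exact ker_id.symm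
  | succ n ih =>
    simp only [Fsig, ih, iSup_fin_two, Equiv.Perm.coe_one, id_eq, Matrix.cons_val_zero,
      Matrix.cons_val_one]
    exact sup_inf_eq_ker_sub_pow_succ hp hq n

theorem Fsig_swap_eq_ker_pow (hp : IsIdempotentElem p) (hq : IsIdempotentElem q) (n : ℕ) :
    Fsig ![range p, ker p] ![range q, ker q] (Equiv.swap 0 1) n = ker ((p + q - 1) ^ n) := by
  induction n with
  | zero => exact ker_id.symm
  | succ n ih =>
    simp only [Fsig, ih, iSup_fin_two, Equiv.swap_apply_left, Equiv.swap_apply_right,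
      Matrix.cons_val_zero, Matrix.cons_val_one]
    rw [hq.ker_eq_range_one_sub, hq.range_eq_ker_one_sub, ← show p - (1 - q) = p + q - 1 by abel]
    exact sup_inf_eq_ker_sub_pow_succ hp hq.one_sub n

theorem Fseq_le_ker_pow_sup_ker_pow (hp : IsIdempotentElem p) (hq : IsIdempotentElem q) (n : ℕ) :
    Fseq ![range p, ker p] ![range q, ker q] n ≤ ker ((p + q - 1) ^ n) ⊔ ker ((p - q) ^ n) := by
  have hab := hp.add_sub_one_mul_sub hq
  have hba : (p - q) * (p + q - 1) = -((p + q - 1) * (p - q)) := by rw [hab, neg_neg]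
  have hsq := hp.add_sub_one_sq_add_sub_sq hq
  induction n with
  | zero => exact bot_le
  | succ n ih =>
    have hSa : ker ((p + q - 1) ^ n) ⊔ ker ((p - q) ^ n) ∈ (p + q - 1).invtSubmodule :=
      invtSubmodule.sup_mem (ker_mem_invtSubmodule_of_commute ((Commute.refl _).pow_left n))
        (ker_pow_mem_invtSubmodule_of_mul_eq_neg hba n)
    have hSb : ker ((p + q - 1) ^ n) ⊔ ker ((p - q) ^ n) ∈ (p - q).invtSubmodule :=
      invtSubmodule.sup_mem (ker_pow_mem_invtSubmodule_of_mul_eq_neg hab n)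
        (ker_mem_invtSubmodule_of_commute ((Commute.refl _).pow_left n))
    obtain ⟨hSp, hSq⟩ := mem_invtSubmodule_of_add_sub_one_of_sub hSa hSb
    refine iSup₂_le fun i j => ?_
    refine (inf_le_inf (sup_le_sup_right ih _) (sup_le_sup_right ih _)).trans
      ((sup_inf_le_comap_sub_sup_comap_add_sub_one hp hq hSp hSq i j).trans (sup_le ?_ ?_))
    · exact (comap_sup_ker_pow_le hab hsq n).trans
        (sup_le_sup_right (ker_pow_le_ker_pow_of_le _ n.le_succ) _)
    · rw [sup_comm (ker ((p + q - 1) ^ n)), sup_comm (ker ((p + q - 1) ^ (n + 1)))]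
      exact (comap_sup_ker_pow_le hba (by rw [add_comm, hsq]) n).trans
        (sup_le_sup_right (ker_pow_le_ker_pow_of_le _ n.le_succ) _)

end Sequences

theorem stmt9_general {K E : Type*} [Field K] [AddCommGroup E] [Module K E]
    (hchar : (2 : K) ≠ 0)
    (V W : Fin 2 → Submodule K E)
    (hV : IsCompl (V 0) (V 1)) (hW : IsCompl (W 0) (W 1)) :
    ∀ n : ℕ,
      Fsig V W 1 n ⊓ Fsig V W (Equiv.swap 0 1) n = ⊥ ∧
      Fsig V W 1 n ⊔ Fsig V W (Equiv.swap 0 1) n = Fseq V W n := by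
  obtain ⟨p, hp, rfl⟩ := exists_isIdempotentElem_eq_range_ker V hV
  obtain ⟨q, hq, rfl⟩ := exists_isIdempotentElem_eq_range_ker W hW
  have : Invertible (2 : K) := invertibleOfNonzero hchar
  intro n
  refine ⟨?_, le_antisymm (sup_le (Fsig_le_Fseq _ _ _ n) (Fsig_le_Fseq _ _ _ n)) ?_⟩
  · rw [Fsig_one_eq_ker_pow hp hq, Fsig_swap_eq_ker_pow hp hq]
    refine (Module.End.disjoint_ker_pow_of_sq_add_sq ?_ n n).eq_bot
    rw [add_comm, hp.add_sub_one_sq_add_sub_sq hq]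
  · rw [Fsig_one_eq_ker_pow hp hq, Fsig_swap_eq_ker_pow hp hq, sup_comm]
    exact Fseq_le_ker_pow_sup_ker_pow hp hq n

/-- For every `n`, `F(n) = F_e(n) ⊕ F_τ(n)`, where `e` is the identity permutation
and `τ` the transposition. -/
theorem stmt9 {K E : Type*} [Field K] [AddCommGroup E] [Module K E]
    [FiniteDimensional K E] (hchar : (2 : K) ≠ 0)
    (V W : Fin 2 → Submodule K E)
    (hV : IsCompl (V 0) (V 1)) (hW : IsCompl (W 0) (W 1)) :
    ∀ n : ℕ,
      Fsig V W 1 n ⊓ Fsig V W (Equiv.swap 0 1) n = ⊥ ∧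
      Fsig V W 1 n ⊔ Fsig V W (Equiv.swap 0 1) n = Fseq V W n :=
  stmt9_general hchar V W hV hW
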